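/- Well-specified ERM bound: In the setting above, if additionally the ground truth Y ∈ F, then with probability at least 1 − δ the ERM Ŷ satisfies ∑_v Pr(Ŷ_v ≠ Z_v) − min_{Y'∈F} ∑_v Pr(Y'_v ≠ Z_v) ≤ (4/3 + 1/ε)·log(|F|/δ), where ε = 1/2 − q. -/

import Mathlib

open Finset

/-- Probability weight of a vertex-noise configuration `g`: each coordinate is flipped
independently with probability `q`. -/
def vwt {V : Type*} [Fintype V] (q : ℝ) (g : V → Bool) : ℝ :=
  ∏ u : V, (if g u then q else 1 - q)

/-- Noisy vertex observations determined by ground truth `Y` and noise `g`. -/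
def Zof {V : Type*} (Y : V → ℤˣ) (g : V → Bool) : V → ℤˣ :=
  fun v => (if g v then -1 else 1) * Y v

/-- The (true) risk `∑_v Pr(Y'_v ≠ Z_v)` of a labeling `Y'` under vertex noise rate `q`. -/
def risk {V : Type*} [Fintype V] [DecidableEq V] (q : ℝ) (Y Y' : V → ℤˣ) : ℝ :=
  ∑ v : V, ∑ g : V → Bool, vwt q g * (if Y' v ≠ Zof Y g v then 1 else 0)

/-! Since `Y ∈ F` and `q < 1/2`, the risk of a labeling `Y'` is `q |V| + 2ε d(Y', Y)` with `d` the
Hamming distance, so the minimal risk over `F` is attained at `Y` and the excess risk of the ERM `Ŷ`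
is `2ε d(Ŷ, Y)`. If it exceeds `B = (4/3 + 1/ε) log(|F|/δ)`, some `Y' ∈ F` with `2ε d(Y', Y) > B` fits the
observations at least as well as `Y`, which forces at least half of the coordinates where `Y'` and
`Y` differ to be flipped. By a Chernoff bound this has probability at most
`(2√(q(1-q)))^d ≤ exp(-2ε² d) ≤ δ/|F|`, and a union bound over `F` concludes. -/

theorem pow_mul_pow_le_sqrt_mul_sqrt_pow {a b : ℝ} (ha : 0 ≤ a) (hab : a ≤ b) {m n : ℕ}
    (hnm : n ≤ m) : a ^ m * b ^ n ≤ (√a * √b) ^ (m + n) := by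
  obtain ⟨j, rfl⟩ := Nat.exists_eq_add_of_le hnm
  have hsq : √a * √b * (√a * √b) = a * b := by
    rw [mul_mul_mul_comm, Real.mul_self_sqrt ha, Real.mul_self_sqrt (ha.trans hab)]
  have ha_le : a ≤ √a * √b := by
    calc a = √a * √a := (Real.mul_self_sqrt ha).symm
      _ ≤ √a * √b := by gcongr
  calc a ^ (n + j) * b ^ n = (a * b) ^ n * a ^ j := by ring
    _ ≤ (a * b) ^ n * (√a * √b) ^ j := by
      have := pow_nonneg (mul_nonneg ha (ha.trans hab)) n
      gcongr
    _ = (√a * √b) ^ (n + j + n) := by rw [← hsq]; ring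

theorem two_mul_sqrt_mul_sqrt_le_exp {q : ℝ} (hq0 : 0 ≤ q) (hq1 : q ≤ 1) :
    2 * √q * √(1 - q) ≤ Real.exp (-(1 - 2 * q) ^ 2 / 2) := by
  have hsq : (2 * √q * √(1 - q)) ^ 2 = 1 - (1 - 2 * q) ^ 2 := by
    rw [mul_pow, mul_pow, Real.sq_sqrt hq0, Real.sq_sqrt (by linarith)]
    ring
  have hexp : Real.exp (-(1 - 2 * q) ^ 2 / 2) ^ 2 = Real.exp (-(1 - 2 * q) ^ 2) := by
    rw [← Real.exp_nat_mul]
    ring_nf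
  refine (pow_le_pow_iff_left₀ (by positivity) (by positivity) two_ne_zero).1 ?_
  rw [hsq, hexp]
  linarith [Real.add_one_le_exp (-(1 - 2 * q) ^ 2)]

theorem exp_neg_le_div_of_mul_log_lt {ε δ N d : ℝ} (hε : 0 < ε) (hδ : 0 < δ) (hN : 0 < N)
    (hd : 0 ≤ d) (h : (4 / 3 + 1 / ε) * Real.log (N / δ) < 2 * ε * d) :
    Real.exp (-(2 * ε) ^ 2 / 2 * d) ≤ δ / N := by
  set L := Real.log (N / δ)
  have hL : L ≤ 2 * ε ^ 2 * d := by
    have hεh : ε * ((4 / 3 + 1 / ε) * L) = (4 / 3 * ε + 1) * L := by field_simp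
    rcases le_or_gt 0 L with hL | hL
    · nlinarith [mul_lt_mul_of_pos_left h hε]
    · nlinarith
  have hδN : δ / N = Real.exp (-L) := by rw [Real.exp_neg, Real.exp_log (div_pos hN hδ), inv_div]
  rw [hδN]
  exact Real.exp_le_exp.2 (by nlinarith)

section Noise

variable {V : Type*} [Fintype V] [DecidableEq V]

omit [DecidableEq V] in
theorem vwt_nonneg {q : ℝ} (hq0 : 0 ≤ q) (hq1 : q ≤ 1) (g : V → Bool) : 0 ≤ vwt q g :=
  prod_nonneg fun u _ => by split <;> linarith

theorem sum_prod_apply_bool (h : V → Bool → ℝ) :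
    ∑ g : V → Bool, ∏ u, h u (g u) = ∏ u, (h u true + h u false) := by
  simp [← Fintype.prod_sum]

theorem sum_vwt_mul_prod (q : ℝ) (f : V → Bool → ℝ) :
    ∑ g : V → Bool, vwt q g * ∏ u, f u (g u) = ∏ u, (q * f u true + (1 - q) * f u false) := by
  simp only [vwt, ← prod_mul_distrib]
  rw [sum_prod_apply_bool fun u b => (if b then q else 1 - q) * f u b]
  simp

theorem sum_vwt (q : ℝ) : ∑ g : V → Bool, vwt q g = 1 := by
  simpa using sum_vwt_mul_prod (V := V) q fun _ _ => 1

def noiseProb (q : ℝ) (E : (V → Bool) → Prop) [DecidablePred E] : ℝ :=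
  ∑ g, vwt q g * if E g then 1 else 0

variable {q : ℝ}

theorem noiseProb_congr {E E' : (V → Bool) → Prop} [DecidablePred E] [DecidablePred E']
    (h : ∀ g, E g ↔ E' g) : noiseProb q E = noiseProb q E' := by
  simp only [noiseProb, h]

theorem noiseProb_not (E : (V → Bool) → Prop) [DecidablePred E] :
    noiseProb q (fun g => ¬E g) = 1 - noiseProb q E := by
  rw [eq_sub_iff_add_eq, noiseProb, noiseProb, ← sum_add_distrib]
  refine (sum_congr rfl fun g _ => ?_).trans (sum_vwt q)
  split_ifs <;> ring

theorem noiseProb_mono (hq0 : 0 ≤ q) (hq1 : q ≤ 1) {E E' : (V → Bool) → Prop}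
    [DecidablePred E] [DecidablePred E'] (h : ∀ g, E g → E' g) :
    noiseProb q E ≤ noiseProb q E' :=
  sum_le_sum fun g _ => mul_le_mul_of_nonneg_left (by split_ifs <;> simp_all) (vwt_nonneg hq0 hq1 g)

theorem noiseProb_exists_le_sum {ι : Type*} (hq0 : 0 ≤ q) (hq1 : q ≤ 1) (s : Finset ι)
    (E : ι → (V → Bool) → Prop) [∀ i, DecidablePred (E i)]
    [DecidablePred fun g => ∃ i ∈ s, E i g] :
    noiseProb q (fun g => ∃ i ∈ s, E i g) ≤ ∑ i ∈ s, noiseProb q (E i) := by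
  simp only [noiseProb]
  rw [sum_comm]
  refine sum_le_sum fun g _ => ?_
  rw [← mul_sum]
  refine mul_le_mul_of_nonneg_left ?_ (vwt_nonneg hq0 hq1 g)
  split_ifs with h
  · obtain ⟨i, hi, hE⟩ := h
    exact (if_pos hE).symm.le.trans <| single_le_sum (f := fun j => if E j g then (1 : ℝ) else 0)
      (fun j _ => by split_ifs <;> norm_num) hi
  · exact sum_nonneg fun j _ => by split_ifs <;> norm_num

theorem noiseProb_apply_eq (v : V) (b : Bool) :
    noiseProb q (fun g => g v = b) = if b then q else 1 - q := by
  set f : V → Bool → ℝ := fun u c => if u = v then (if c = b then 1 else 0) else 1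
  have hf (g : V → Bool) : ∏ u, f u (g u) = if g v = b then 1 else 0 := by simp [f]
  have hmarg (u : V) :
      q * f u true + (1 - q) * f u false = if u = v then (if b then q else 1 - q) else 1 := by
    by_cases u = v <;> cases b <;> simp [f, *]
  calc noiseProb q (fun g => g v = b) = ∑ g, vwt q g * ∏ u, f u (g u) := by simp only [noiseProb, hf]
    _ = if b then q else 1 - q := by simp [sum_vwt_mul_prod, hmarg]

theorem noiseProb_half_flipped_le (hq0 : 0 ≤ q) (hq : q ≤ 1 / 2) (p : V → Prop)
    [DecidablePred p] :
    noiseProb q (fun g => #{v | p v} ≤ 2 * #{v | p v ∧ g v}) ≤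
      (2 * √q * √(1 - q)) ^ #{v | p v} := by
  set S : Finset V := {v | p v}
  -- On the event, the coordinates in `S` carry weight `q^m (1-q)^(#S-m)` with `2m ≥ #S`; the
  -- remaining factor is a product weight with total mass `2^#S`.
  have hpt (g : V → Bool) : vwt q g * (if #S ≤ 2 * #{v | p v ∧ g v} then 1 else 0) ≤
      (√q * √(1 - q)) ^ #S * ∏ u, if u ∈ S then 1 else if g u then q else 1 - q := by
    have hw : 0 ≤ ∏ u ∈ Sᶜ, (if g u then q else 1 - q) :=
      prod_nonneg fun u _ => by split <;> linarith
    have hSc : ∏ u, (if u ∈ S then 1 else if g u then q else 1 - q) =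
        ∏ u ∈ Sᶜ, (if g u then q else 1 - q) := by
      rw [← prod_mul_prod_compl S, prod_ite_of_true fun u hu => hu, prod_const_one, one_mul,
        prod_ite_of_false fun u hu => mem_compl.1 hu]
    rw [hSc]
    split_ifs with h
    · have hS : ∏ u ∈ S, (if g u then q else 1 - q) =
          q ^ #{u ∈ S | g u} * (1 - q) ^ #{u ∈ S | ¬ g u} := by
        rw [prod_ite, prod_const, prod_const]
      have hm : #{u ∈ S | g u} = #{v | p v ∧ g v} := by rw [filter_filter]
      have hcard := card_filter_add_card_filter_not (s := S) (fun u => g u = true)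
      rw [mul_one, vwt, ← prod_mul_prod_compl S, hS, ← hcard]
      gcongr
      exact pow_mul_pow_le_sqrt_mul_sqrt_pow hq0 (by linarith) (by omega)
    · rw [mul_zero]
      exact mul_nonneg (by positivity) hw
  calc noiseProb q _
      ≤ ∑ g : V → Bool, (√q * √(1 - q)) ^ #S * ∏ u, if u ∈ S then 1 else if g u then q else 1 - q :=
        sum_le_sum fun g _ => hpt g
    _ = (√q * √(1 - q)) ^ #S * ∏ u, if u ∈ S then 2 else 1 := by
      rw [← mul_sum, sum_prod_apply_bool fun u b => if u ∈ S then 1 else if b then q else 1 - q]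
      congr 1
      exact prod_congr rfl fun u _ => by by_cases hu : u ∈ S <;> simp [hu, one_add_one_eq_two]
    _ = (√q * √(1 - q)) ^ #S * 2 ^ #S := by rw [prod_ite_mem, univ_inter, prod_const]
    _ = (2 * √q * √(1 - q)) ^ #S := by ring

end Noise

section Labels

variable {V : Type*} [Fintype V] [DecidableEq V]

omit [Fintype V] [DecidableEq V] in
theorem ne_Zof_iff (Y Y' : V → ℤˣ) (g : V → Bool) (v : V) :
    Y' v ≠ Zof Y g v ↔ g v = decide (Y' v = Y v) := by
  unfold Zof; cases g v <;> simp [Int.units_ne_iff_eq_neg]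

theorem risk_eq (q : ℝ) (Y Y' : V → ℤˣ) :
    risk q Y Y' = q * Fintype.card V + (1 - 2 * q) * hammingDist Y' Y := by
  have hv (v : V) : noiseProb q (fun g => Y' v ≠ Zof Y g v) =
      q + (1 - 2 * q) * if Y' v ≠ Y v then 1 else 0 := by
    rw [noiseProb_congr (ne_Zof_iff Y Y' · v), noiseProb_apply_eq]
    by_cases Y' v = Y v <;> simp [*]
    ring
  calc risk q Y Y' = ∑ v, noiseProb q (fun g => Y' v ≠ Zof Y g v) := rfl
    _ = _ := by
      simp only [hv, sum_add_distrib, ← mul_sum, sum_boole]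
      simp [hammingDist, mul_comm]

theorem risk_sub_inf'_risk {q : ℝ} (hq : q ≤ 1 / 2) {Y : V → ℤˣ} {F : Finset (V → ℤˣ)}
    (hF : F.Nonempty) (hY : Y ∈ F) (Y' : V → ℤˣ) :
    risk q Y Y' - F.inf' hF (fun Y' => risk q Y Y') = (1 - 2 * q) * hammingDist Y' Y := by
  have hmin : F.inf' hF (fun Y' => risk q Y Y') = q * Fintype.card V := by
    refine le_antisymm ((inf'_le _ hY).trans (by simp [risk_eq])) (le_inf' _ _ fun Z _ => ?_)
    rw [risk_eq]
    have : 0 ≤ 1 - 2 * q := by linarith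
    exact le_add_of_nonneg_right (by positivity)
  rw [hmin, risk_eq]
  ring

omit [DecidableEq V] in
theorem hammingDist_Zof_add (Y Y' : V → ℤˣ) (g : V → Bool) :
    hammingDist Y' (Zof Y g) + 2 * #{v | Y' v ≠ Y v ∧ g v} =
      hammingDist Y' Y + hammingDist Y (Zof Y g) := by
  simp only [hammingDist, card_filter, mul_sum, ← sum_add_distrib]
  refine sum_congr rfl fun v _ => ?_
  simp only [ne_Zof_iff]
  by_cases Y' v = Y v <;> cases g v <;> simp [*]

omit [DecidableEq V] in
theorem hammingDist_le_two_mul_of_hammingDist_Zof_le {Y Y' : V → ℤˣ} {g : V → Bool}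
    (h : hammingDist Y' (Zof Y g) ≤ hammingDist Y (Zof Y g)) :
    hammingDist Y' Y ≤ 2 * #{v | Y' v ≠ Y v ∧ g v} := by
  have := hammingDist_Zof_add Y Y' g
  omega

theorem noiseProb_far_and_half_flipped_le {q ε δ N : ℝ} (hq0 : 0 ≤ q) (hq : q = 1/2 - ε)
    (hε : 0 < ε) (hδ : 0 < δ) (hN : 0 < N) (Y Y' : V → ℤˣ) :
    noiseProb q (fun g => (4/3 + 1/ε) * Real.log (N / δ) < 2 * ε * hammingDist Y' Y ∧
      hammingDist Y' Y ≤ 2 * #{v | Y' v ≠ Y v ∧ g v}) ≤ δ / N := by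
  have hq1 : q ≤ 1 := by linarith
  have h2q : 1 - 2 * q = 2 * ε := by rw [hq]; ring
  by_cases hfar : (4/3 + 1/ε) * Real.log (N / δ) < 2 * ε * hammingDist Y' Y
  · calc noiseProb q _
        ≤ noiseProb q (fun g => hammingDist Y' Y ≤ 2 * #{v | Y' v ≠ Y v ∧ g v}) :=
          noiseProb_mono hq0 hq1 fun g hg => hg.2
      _ ≤ (2 * √q * √(1 - q)) ^ hammingDist Y' Y :=
          noiseProb_half_flipped_le hq0 (by linarith) _
      _ ≤ Real.exp (-(1 - 2 * q) ^ 2 / 2) ^ hammingDist Y' Y := by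
          gcongr
          exact two_mul_sqrt_mul_sqrt_le_exp hq0 hq1
      _ = Real.exp (-(2 * ε) ^ 2 / 2 * hammingDist Y' Y) := by
          rw [h2q, ← Real.exp_nat_mul, mul_comm]
      _ ≤ δ / N := exp_neg_le_div_of_mul_log_lt hε hδ hN (by positivity) hfar
  · simp only [noiseProb, hfar, false_and, if_false, mul_zero, sum_const_zero]
    positivity

end Labels

open Classical in
theorem stmt10_general {V : Type*} [Fintype V] [DecidableEq V]
    (q δ ε : ℝ) (hq0 : 0 ≤ q) (hq : q = 1/2 - ε) (hε : 0 < ε)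
    (hδ : 0 < δ)
    (Y : V → ℤˣ) (F : Finset (V → ℤˣ)) (hF : F.Nonempty) (hYF : Y ∈ F)
    (sel : (V → ℤˣ) → (V → ℤˣ))
    (hselF : ∀ Z : V → ℤˣ, sel Z ∈ F)
    (hselERM : ∀ Z : V → ℤˣ, ∀ Y' ∈ F,
      (Finset.univ.filter (fun v => sel Z v ≠ Z v)).card
        ≤ (Finset.univ.filter (fun v => Y' v ≠ Z v)).card) :
    1 - δ ≤ ∑ g : V → Bool, vwt q g *
        (if risk q Y (sel (Zof Y g)) - F.inf' hF (fun Y' => risk q Y Y')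
              ≤ (4/3 + 1/ε) * Real.log (F.card / δ)
          then 1 else 0) := by
  have hq1 : q ≤ 1 := by linarith
  have hN : (0 : ℝ) < #F := by simpa using hF
  set B := (4/3 + 1/ε) * Real.log (F.card / δ)
  set good : (V → Bool) → Prop :=
    fun g => risk q Y (sel (Zof Y g)) - F.inf' hF (fun Y' => risk q Y Y') ≤ B
  set bad : (V → ℤˣ) → (V → Bool) → Prop := fun Y' g =>
    B < 2 * ε * hammingDist Y' Y ∧ hammingDist Y' Y ≤ 2 * #{v | Y' v ≠ Y v ∧ g v}
  have hcover (g : V → Bool) (hg : ¬good g) : ∃ Y' ∈ F, bad Y' g := by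
    refine ⟨sel (Zof Y g), hselF _, ?_,
      hammingDist_le_two_mul_of_hammingDist_Zof_le (hselERM _ Y hYF)⟩
    have hq2 : q ≤ 1 / 2 := by linarith
    have h2q : 1 - 2 * q = 2 * ε := by rw [hq]; ring
    simpa only [good, risk_sub_inf'_risk hq2 hF hYF, h2q, not_le] using hg
  have hbad : noiseProb q (fun g => ¬good g) ≤ δ :=
    calc noiseProb q (fun g => ¬good g)
        ≤ noiseProb q (fun g => ∃ Y' ∈ F, bad Y' g) := noiseProb_mono hq0 hq1 hcover
      _ ≤ ∑ Y' ∈ F, noiseProb q (bad Y') := noiseProb_exists_le_sum hq0 hq1 F bad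
      _ ≤ ∑ Y' ∈ F, δ / #F :=
          sum_le_sum fun Y' _ => noiseProb_far_and_half_flipped_le hq0 hq hε hδ hN Y Y'
      _ = δ := by rw [sum_const, nsmul_eq_mul, mul_div_cancel₀ _ hN.ne']
  rw [noiseProb_not] at hbad
  change 1 - δ ≤ noiseProb q good
  linarith

open Classical in
theorem stmt10 {V : Type*} [Fintype V] [DecidableEq V]
    (q δ ε : ℝ) (hq0 : 0 ≤ q) (hq : q = 1/2 - ε) (hε : 0 < ε)
    (hδ : 0 < δ) (hδ1 : δ ≤ 1)
    (Y : V → ℤˣ) (F : Finset (V → ℤˣ)) (hF : F.Nonempty) (hYF : Y ∈ F)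
    (sel : (V → ℤˣ) → (V → ℤˣ))
    (hselF : ∀ Z : V → ℤˣ, sel Z ∈ F)
    (hselERM : ∀ Z : V → ℤˣ, ∀ Y' ∈ F,
      (Finset.univ.filter (fun v => sel Z v ≠ Z v)).card
        ≤ (Finset.univ.filter (fun v => Y' v ≠ Z v)).card) :
    1 - δ ≤ ∑ g : V → Bool, vwt q g *
        (if risk q Y (sel (Zof Y g)) - F.inf' hF (fun Y' => risk q Y Y')
              ≤ (4/3 + 1/ε) * Real.log (F.card / δ)
          then 1 else 0) :=
  stmt10_general q δ ε hq0 hq hε hδ Y F hF hYF sel hselF hselERM
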